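/- arXiv:1605.03223 — 4 statements merged into one kernel-verified Lean document; each statement's English description precedes it below -/
import Mathlib

section
/- The function f defined on C \ λ(A) by f(s) = (A - sI)^{-1} b / (c^T (A - sI)^{-1} b) extends to an entire (analytic on all of C) function, with value P e_j / (c^T P e_j) at each eigenvalue d_{jj}, provided c^T (A - sI)^{-1} b ≠ 0 for all s ∉ λ(A) and c^T P e_k ≠ 0, e_k^T P^{-1} b ≠ 0 for all k. Specifically, f(s) equals Adj(A - sI) b / (c^T Adj(A - sI) b) wherever the denominator is nonzero, and the latter is a ratio of polynomial (hence entire) vector-valued and scalar functions with nonvanishing denominator at the eigenvalues. -/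
/-!
Put `g s = adj(A - sI) b`. Its entries are polynomials in `s`, so `g` is entire. Off the
spectrum `g s = det(A - sI) • (A - sI)⁻¹ b` with a nonzero determinant, and at `d j` the adjugate
of `P (D - d j) P⁻¹` is `P adj(D - d j) P⁻¹`, where `adj(D - d j)` has the single nonzero entry
`∏_{i ≠ j} (d i - d j)` at `(j, j)`; so `g (d j)` is a nonzero multiple of `P e_j`. In both cases
`g s` is a nonzero multiple of a vector whose `c`-component is nonzero. Hence `c ⬝ g` never
vanishes, `F = (c ⬝ g)⁻¹ • g` is entire, and `F` agrees with the required values because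
`v ↦ (c ⬝ v)⁻¹ • v` is invariant under nonzero scalings.
-/

open Matrix Finset Polynomial

namespace Matrix

variable {ι R : Type*} [Fintype ι] [DecidableEq ι] [CommRing R]

theorem adjugate_eq_det_smul_nonsing_inv {M : Matrix ι ι R} (h : IsUnit M.det) :
    M.adjugate = M.det • M⁻¹ := by
  rw [inv_def, smul_smul, Ring.mul_inverse_cancel _ h, one_smul]

theorem adjugate_conj {P : Matrix ι ι R} (hP : IsUnit P) (N : Matrix ι ι R) :
    (P * N * P⁻¹).adjugate = P * N.adjugate * P⁻¹ := by
  have hdet : IsUnit P.det := (isUnit_iff_isUnit_det P).mp hP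
  rw [adjugate_mul_distrib, adjugate_mul_distrib, adjugate_eq_det_smul_nonsing_inv hdet,
    adjugate_eq_det_smul_nonsing_inv (isUnit_nonsing_inv_det P hdet),
    nonsing_inv_nonsing_inv P hdet, Matrix.smul_mul, Matrix.mul_smul, Matrix.mul_smul, smul_smul,
    det_nonsing_inv_mul_det P hdet, one_smul, Matrix.mul_assoc]

theorem conj_diagonal_sub_smul_one {P : Matrix ι ι R} (hP : IsUnit P) (d : ι → R) (s : R) :
    P * diagonal d * P⁻¹ - s • 1 = P * diagonal (fun i => d i - s) * P⁻¹ := by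
  have hscalar : s • (1 : Matrix ι ι R) = P * (s • 1) * P⁻¹ := by
    rw [Matrix.mul_smul, Matrix.mul_one, Matrix.smul_mul,
      mul_nonsing_inv P ((isUnit_iff_isUnit_det P).mp hP)]
  rw [hscalar, ← Matrix.sub_mul, ← Matrix.mul_sub, smul_one_eq_diagonal, diagonal_sub]

theorem adjugate_diagonal_mulVec_of_apply_eq_zero {v : ι → R} {j : ι} (hv : v j = 0)
    (x : ι → R) :
    (diagonal v).adjugate *ᵥ x = Pi.single j ((∏ i ∈ univ.erase j, v i) * x j) := by
  ext k
  rw [adjugate_diagonal, mulVec_diagonal]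
  rcases eq_or_ne k j with rfl | hk
  · rw [Pi.single_eq_same]
  · rw [Pi.single_eq_of_ne hk, prod_eq_zero (mem_erase.mpr ⟨hk.symm, mem_univ j⟩) hv,
      zero_mul]

theorem det_conj_diagonal_sub_smul_one {P : Matrix ι ι R} (hP : IsUnit P) (d : ι → R)
    (s : R) : (P * diagonal d * P⁻¹ - s • 1).det = ∏ i, (d i - s) := by
  rw [conj_diagonal_sub_smul_one hP, det_conj hP, det_diagonal]

theorem adjugate_conj_diagonal_sub_smul_one_mulVec {P : Matrix ι ι R} (hP : IsUnit P)
    (d : ι → R) (j : ι) (b : ι → R) :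
    (P * diagonal d * P⁻¹ - d j • 1).adjugate *ᵥ b
      = ((∏ i ∈ univ.erase j, (d i - d j)) * (P⁻¹ *ᵥ b) j) • P *ᵥ Pi.single j 1 := by
  rw [conj_diagonal_sub_smul_one hP, adjugate_conj hP, ← mulVec_mulVec, ← mulVec_mulVec,
    adjugate_diagonal_mulVec_of_apply_eq_zero (v := fun i => d i - d j) (sub_self (d j)),
    ← mulVec_smul, ← Pi.single_smul, smul_eq_mul, mul_one]

theorem adjugate_sub_smul_one_mulVec_apply_eq_eval (A : Matrix ι ι R) (b : ι → R) (s : R)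
    (i : ι) :
    ((A - s • 1).adjugate *ᵥ b) i
      = (((C.mapMatrix A - (X : R[X]) • 1).adjugate *ᵥ (C ∘ b)) i).eval s := by
  have hspec : (evalRingHom s).mapMatrix (C.mapMatrix A - (X : R[X]) • 1) = A - s • 1 := by
    ext k l
    by_cases hkl : k = l <;> simp [hkl]
  rw [← coe_evalRingHom, RingHom.map_mulVec, ← RingHom.mapMatrix_apply,
    RingHom.map_adjugate, hspec]
  congr
  ext k
  simp

section Field

variable {K : Type*} [Field K] {P : Matrix ι ι K} {d : ι → K}

theorem exists_adjugate_conj_diagonal_sub_smul_one_mulVec_eq_smul_inv_mulVec (hP : IsUnit P)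
    (b : ι → K) {s : K} (hs : ∀ k, s ≠ d k) :
    ∃ t : K, t ≠ 0 ∧ (P * diagonal d * P⁻¹ - s • 1).adjugate *ᵥ b
      = t • (P * diagonal d * P⁻¹ - s • 1)⁻¹ *ᵥ b := by
  have hdet := det_conj_diagonal_sub_smul_one hP d s
  have hδ : (∏ i, (d i - s)) ≠ 0 := prod_ne_zero_iff.mpr fun i _ => sub_ne_zero.mpr (hs i).symm
  refine ⟨_, hδ, ?_⟩
  rw [adjugate_eq_det_smul_nonsing_inv (hdet ▸ hδ.isUnit), hdet, smul_mulVec]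

theorem exists_adjugate_conj_diagonal_sub_smul_one_mulVec_eq_smul_single (hP : IsUnit P)
    (hd : Function.Injective d) {b : ι → K} {j : ι} (hb : (P⁻¹ *ᵥ b) j ≠ 0) :
    ∃ t : K, t ≠ 0 ∧ (P * diagonal d * P⁻¹ - d j • 1).adjugate *ᵥ b = t • P *ᵥ Pi.single j 1 := by
  refine ⟨_, mul_ne_zero ?_ hb, adjugate_conj_diagonal_sub_smul_one_mulVec hP d j b⟩
  exact prod_ne_zero_iff.mpr fun i hi => sub_ne_zero.mpr fun hij => (mem_erase.mp hi).1 (hd hij)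

end Field

end Matrix

theorem differentiable_adjugate_sub_smul_one_mulVec {𝕜 ι : Type*} [NontriviallyNormedField 𝕜]
    [Fintype ι] [DecidableEq ι] (A : Matrix ι ι 𝕜) (b : ι → 𝕜) :
    Differentiable 𝕜 fun s : 𝕜 => (A - s • 1).adjugate *ᵥ b := by
  refine differentiable_pi.mpr fun i => ?_
  simp only [adjugate_sub_smul_one_mulVec_apply_eq_eval A b]
  exact Polynomial.differentiable _

theorem Differentiable.inv_dotProduct_smul {𝕜 ι : Type*} [NontriviallyNormedField 𝕜]
    [Fintype ι] {g : 𝕜 → ι → 𝕜} (hg : Differentiable 𝕜 g) (c : ι → 𝕜)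
    (hne : ∀ s, c ⬝ᵥ g s ≠ 0) : Differentiable 𝕜 fun s => (c ⬝ᵥ g s)⁻¹ • g s := by
  have hdot : Differentiable 𝕜 fun s => c ⬝ᵥ g s :=
    Differentiable.fun_sum fun i _ => (differentiable_pi.mp hg i).const_mul (c i)
  exact (hdot.inv hne).smul hg

theorem inv_dotProduct_smul_smul {K ι : Type*} [Field K] [Fintype ι] {t : K} (ht : t ≠ 0)
    (c v : ι → K) : (c ⬝ᵥ (t • v))⁻¹ • (t • v) = (c ⬝ᵥ v)⁻¹ • v := by
  rw [dotProduct_smul, smul_eq_mul, smul_smul, _root_.mul_inv_rev, inv_mul_cancel_right₀ ht]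

/-- The function `f(s) = (A - sI)⁻¹ b / (cᵀ (A - sI)⁻¹ b)` extends to an entire
function with value `P e_j / (cᵀ P e_j)` at each eigenvalue `d j`; it coincides
with `Adj(A - sI) b / (cᵀ Adj(A - sI) b)` wherever the latter denominator is
nonzero. -/
theorem stmt_3 {n : ℕ}
    (P : Matrix (Fin n) (Fin n) ℂ) (hP : IsUnit P)
    (d : Fin n → ℂ) (hd : Function.Injective d)
    (A : Matrix (Fin n) (Fin n) ℂ) (hA : A = P * Matrix.diagonal d * P⁻¹)
    (b c : Fin n → ℂ)
    (hden : ∀ s : ℂ, (∀ k : Fin n, s ≠ d k) →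
      c ⬝ᵥ (A - s • (1 : Matrix (Fin n) (Fin n) ℂ))⁻¹.mulVec b ≠ 0)
    (hres : ∀ k : Fin n,
      (c ⬝ᵥ P.mulVec (Pi.single k 1)) ≠ 0 ∧ (P⁻¹.mulVec b k) ≠ 0) :
    ∃ F : ℂ → (Fin n → ℂ),
      Differentiable ℂ F ∧
      (∀ s : ℂ, (∀ k : Fin n, s ≠ d k) →
        F s = (c ⬝ᵥ (A - s • (1 : Matrix (Fin n) (Fin n) ℂ))⁻¹.mulVec b)⁻¹ •
          (A - s • (1 : Matrix (Fin n) (Fin n) ℂ))⁻¹.mulVec b) ∧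
      (∀ j : Fin n,
        F (d j) = (c ⬝ᵥ P.mulVec (Pi.single j 1))⁻¹ • P.mulVec (Pi.single j 1)) ∧
      (∀ s : ℂ,
        c ⬝ᵥ (A - s • (1 : Matrix (Fin n) (Fin n) ℂ)).adjugate.mulVec b ≠ 0 →
        F s = (c ⬝ᵥ (A - s • (1 : Matrix (Fin n) (Fin n) ℂ)).adjugate.mulVec b)⁻¹ •
          (A - s • (1 : Matrix (Fin n) (Fin n) ℂ)).adjugate.mulVec b) := by
  subst hA
  set g : ℂ → Fin n → ℂ := fun s => (P * diagonal d * P⁻¹ - s • 1).adjugate *ᵥ b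
  have hoff : ∀ s : ℂ, (∀ k, s ≠ d k) →
      ∃ t : ℂ, t ≠ 0 ∧ g s = t • (P * diagonal d * P⁻¹ - s • 1)⁻¹ *ᵥ b := fun s hs =>
    exists_adjugate_conj_diagonal_sub_smul_one_mulVec_eq_smul_inv_mulVec hP b hs
  have heig : ∀ j, ∃ t : ℂ, t ≠ 0 ∧ g (d j) = t • P *ᵥ Pi.single j 1 := fun j =>
    exists_adjugate_conj_diagonal_sub_smul_one_mulVec_eq_smul_single hP hd (hres j).2
  have hne : ∀ s, c ⬝ᵥ g s ≠ 0 := by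
    intro s
    by_cases hs : ∀ k, s ≠ d k
    · obtain ⟨t, ht, hgs⟩ := hoff s hs
      simpa [hgs, ht] using hden s hs
    · push Not at hs
      obtain ⟨j, rfl⟩ := hs
      obtain ⟨t, ht, hgj⟩ := heig j
      simpa [hgj, ht] using (hres j).1
  refine ⟨fun s => (c ⬝ᵥ g s)⁻¹ • g s,
    (differentiable_adjugate_sub_smul_one_mulVec _ b).inv_dotProduct_smul c hne,
    fun s hs => ?_, fun j => ?_, fun s _ => rfl⟩
  · obtain ⟨t, ht, hgs⟩ := hoff s hs
    simp only [hgs, inv_dotProduct_smul_smul ht]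
  · obtain ⟨t, ht, hgj⟩ := heig j
    simp only [hgj, inv_dotProduct_smul_smul ht]
end

section
/- With S_0 a tuple of p distinct eigenvalues (d_{k_1 k_1},...,d_{k_p k_p}) and X, Y as in the eigenvector columns, F(S_0) := (Y^T X)^{-1}(Y^T A X) = diag(d_{k_1 k_1},...,d_{k_p k_p}). In particular S_0 is a fixed point of the map G(S) = (eigenvalues of F(S)). -/
/-!
The columns of `X` are rescaled columns `κ j` of `P` and the columns of `Y` rescaled rows
`κ j` of `P⁻¹`, so `Yᵀ L X = diag α · (P⁻¹ L P)[κ, κ] · diag β` for every matrix `L`.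
Taking `L = 1` gives the diagonal matrix `diag (α β)`, invertible by the condition on `R`,
and taking `L = A` gives `diag (α β) · diag (d ∘ κ)`, since `P⁻¹ A P = diag d`.
-/

open Matrix

namespace Matrix

variable {m n ι R : Type*} [Fintype n] [Fintype ι] [CommSemiring R]

theorem eq_submatrix_mul_diagonal_of_col_eq [DecidableEq n] [DecidableEq ι]
    {M : Matrix m n R} {X : Matrix m ι R} {κ : ι → n} {β : ι → R}
    (h : ∀ j, (fun i => X i j) = β j • M *ᵥ Pi.single (κ j) 1) :
    X = M.submatrix id κ * diagonal β := by
  ext i j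
  simpa [mulVec_single_one, mul_comm] using congrFun (h j) i

theorem dotProduct_transpose_mulVec_single_one [DecidableEq n] (M : Matrix n n R)
    (b : n → R) (k : n) :
    b ⬝ᵥ Mᵀ *ᵥ Pi.single k 1 = (M *ᵥ b) k := by
  rw [mulVec_single_one, col_transpose, mulVec, dotProduct_comm]
  rfl

theorem transpose_mul_mul_submatrix_mul_diagonal [DecidableEq ι] (M L N : Matrix n n R)
    (κ : ι → n) (α β : ι → R) :
    (Mᵀ.submatrix id κ * diagonal α)ᵀ * L * (N.submatrix id κ * diagonal β)
      = diagonal α * (M * L * N).submatrix κ κ * diagonal β := by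
  rw [transpose_mul, diagonal_transpose, transpose_submatrix, transpose_transpose,
    submatrix_mul _ _ _ id _ Function.bijective_id,
    submatrix_mul _ _ _ id _ Function.bijective_id, submatrix_id_id]
  simp only [Matrix.mul_assoc]

end Matrix

theorem stmt_7_general {n p : ℕ}
    (P : Matrix (Fin n) (Fin n) ℂ) (hP : IsUnit P)
    (d : Fin n → ℂ)
    (A : Matrix (Fin n) (Fin n) ℂ) (hA : A = P * Matrix.diagonal d * P⁻¹)
    (b c : Fin n → ℂ)
    (κ : Fin p → Fin n) (hκ : StrictMono κ)
    (hR : ∀ k : Fin n, (c ⬝ᵥ P.mulVec (Pi.single k 1)) * (P⁻¹.mulVec b k) ≠ 0)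
    (X Y : Matrix (Fin n) (Fin p) ℂ)
    (hX : ∀ j : Fin p, (fun i => X i j)
      = (c ⬝ᵥ P.mulVec (Pi.single (κ j) 1))⁻¹ • P.mulVec (Pi.single (κ j) 1))
    (hY : ∀ j : Fin p, (fun i => Y i j)
      = (b ⬝ᵥ P⁻¹ᵀ.mulVec (Pi.single (κ j) 1))⁻¹ • P⁻¹ᵀ.mulVec (Pi.single (κ j) 1)) :
    (Yᵀ * X)⁻¹ * (Yᵀ * A * X) = Matrix.diagonal (fun j => d (κ j)) := by
  set α : Fin p → ℂ := fun j => (b ⬝ᵥ P⁻¹ᵀ *ᵥ Pi.single (κ j) 1)⁻¹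
  set β : Fin p → ℂ := fun j => (c ⬝ᵥ P *ᵥ Pi.single (κ j) 1)⁻¹
  have hPdet : IsUnit P.det := (isUnit_iff_isUnit_det P).mp hP
  have hαβ : ∀ j, α j * β j ≠ 0 := fun j => by
    obtain ⟨hc, hb⟩ := mul_ne_zero_iff.mp (hR (κ j))
    rw [← dotProduct_transpose_mulVec_single_one] at hb
    exact mul_ne_zero (inv_ne_zero hb) (inv_ne_zero hc)
  have hYLX := (transpose_mul_mul_submatrix_mul_diagonal P⁻¹ · P κ α β)
  rw [← eq_submatrix_mul_diagonal_of_col_eq hX, ← eq_submatrix_mul_diagonal_of_col_eq hY]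
    at hYLX
  have hYX : Yᵀ * X = diagonal (α * β) := by
    rw [← Matrix.mul_one Yᵀ, hYLX, Matrix.mul_one, nonsing_inv_mul _ hPdet,
      submatrix_one _ hκ.injective, Matrix.mul_one, diagonal_mul_diagonal]
    rfl
  have hYAX : Yᵀ * A * X = Yᵀ * X * diagonal (fun j => d (κ j)) := by
    have hPAP : P⁻¹ * A * P = diagonal d := by
      rw [hA, Matrix.mul_assoc, nonsing_inv_mul_cancel_right _ _ hPdet,
        nonsing_inv_mul_cancel_left _ _ hPdet]
    rw [hYLX, hPAP, submatrix_diagonal _ _ hκ.injective, hYX, diagonal_mul_diagonal,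
      diagonal_mul_diagonal, diagonal_mul_diagonal]
    congr 1
    ext j
    simp only [Function.comp_apply, Pi.mul_apply]
    ring
  have hdet : IsUnit (Yᵀ * X).det := by
    rw [hYX, det_diagonal]
    exact isUnit_iff_ne_zero.mpr (Finset.prod_ne_zero_iff.mpr fun j _ => hαβ j)
  rw [hYAX, nonsing_inv_mul_cancel_left _ _ hdet]

/-- At a tuple of distinct eigenvalues, `F(S₀) = (Yᵀ X)⁻¹ (Yᵀ A X)` is the
diagonal matrix of those eigenvalues; in particular the tuple is a fixed point
of the eigenvalue map `G`. -/
theorem stmt_7 {n p : ℕ}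
    (P : Matrix (Fin n) (Fin n) ℂ) (hP : IsUnit P)
    (d : Fin n → ℂ) (hd : Function.Injective d)
    (A : Matrix (Fin n) (Fin n) ℂ) (hA : A = P * Matrix.diagonal d * P⁻¹)
    (b c : Fin n → ℂ)
    (κ : Fin p → Fin n) (hκ : StrictMono κ)
    (hR : ∀ k : Fin n, (c ⬝ᵥ P.mulVec (Pi.single k 1)) * (P⁻¹.mulVec b k) ≠ 0)
    (X Y : Matrix (Fin n) (Fin p) ℂ)
    (hX : ∀ j : Fin p, (fun i => X i j)
      = (c ⬝ᵥ P.mulVec (Pi.single (κ j) 1))⁻¹ • P.mulVec (Pi.single (κ j) 1))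
    (hY : ∀ j : Fin p, (fun i => Y i j)
      = (b ⬝ᵥ P⁻¹ᵀ.mulVec (Pi.single (κ j) 1))⁻¹ • P⁻¹ᵀ.mulVec (Pi.single (κ j) 1)) :
    (Yᵀ * X)⁻¹ * (Yᵀ * A * X) = Matrix.diagonal (fun j => d (κ j)) :=
  stmt_7_general P hP d A hA b c κ hκ hR X Y hX hY
end

section
/- For S = (s_1,...,s_p) with no s_i an eigenvalue of A, F(S) := (Y(S)^T X(S))^{-1} (Y(S)^T A X(S)) = diag(S) + (Y(S)^T X(S))^{-1} e e^T diag(1/(c^T(A-s_1 I)^{-1}b), ..., 1/(c^T(A-s_p I)^{-1}b)), where e = (1,...,1)^T ∈ C^p, using Y(S)^T b = e. -/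
open Matrix

/-!
With `dⱼ = cᵀ(A - sⱼI)⁻¹b`, the resolvent identity `A(A - sI)⁻¹b = s(A - sI)⁻¹b + b` shows that
the columns of `X` satisfy `A xⱼ = sⱼ xⱼ + dⱼ⁻¹ b`, i.e. `AX = X diag(S) + b wᵀ` with `wⱼ = dⱼ⁻¹`.
Transposing the resolvent gives `yᵢᵀ b = dᵢ⁻¹ · cᵀ(A - sᵢI)⁻¹b = 1`, so `Yᵀb = e` and
`YᵀAX = YᵀX diag(S) + e wᵀ`; multiplying on the left by `(YᵀX)⁻¹` gives the formula.
-/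

namespace Matrix

variable {m ι R : Type*} [Fintype m] [CommRing R]

theorem isUnit_of_dotProduct_nonsing_inv_mulVec_ne_zero [DecidableEq m] {M : Matrix m m R}
    {b c : m → R} (h : c ⬝ᵥ M⁻¹ *ᵥ b ≠ 0) : IsUnit M := by
  rw [isUnit_iff_isUnit_det]
  by_contra hM
  simp [nonsing_inv_apply_not_isUnit M hM] at h

theorem mulVec_nonsing_inv_sub_smul_mulVec [DecidableEq m] {A : Matrix m m R} {s : R}
    (h : IsUnit (A - s • 1)) (b : m → R) :
    A *ᵥ ((A - s • 1)⁻¹ *ᵥ b) = s • ((A - s • 1)⁻¹ *ᵥ b) + b := by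
  have hb : (A - s • 1) *ᵥ ((A - s • 1)⁻¹ *ᵥ b) = b := by
    rw [mulVec_mulVec, mul_nonsing_inv _ ((isUnit_iff_isUnit_det _).mp h), one_mulVec]
  rwa [sub_mulVec, smul_mulVec, one_mulVec, sub_eq_iff_eq_add'] at hb

theorem nonsing_inv_transpose_sub_smul_mulVec_dotProduct [DecidableEq m] (A : Matrix m m R)
    (s : R) (b c : m → R) :
    (Aᵀ - s • 1)⁻¹ *ᵥ c ⬝ᵥ b = c ⬝ᵥ (A - s • 1)⁻¹ *ᵥ b := by
  have hT : Aᵀ - s • 1 = (A - s • 1)ᵀ := by rw [transpose_sub, transpose_smul, transpose_one]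
  rw [hT, ← transpose_nonsing_inv, ← vecMul_transpose, transpose_transpose, dotProduct_mulVec]

theorem mul_eq_mul_diagonal_add_vecMulVec [Fintype ι] [DecidableEq ι]
    {A : Matrix m m R} {X : Matrix m ι R} {s w : ι → R} {b : m → R}
    (h : ∀ j, A *ᵥ (fun r => X r j) = s j • (fun r => X r j) + w j • b) :
    A * X = X * diagonal s + vecMulVec b w := by
  ext r j
  rw [add_apply, mul_diagonal]
  simpa [mul_apply, mulVec, dotProduct, vecMulVec_apply, mul_comm] using congrFun (h j) r

theorem nonsing_inv_mul_mul_mul_eq_of_mul_eq [Fintype ι] [DecidableEq ι]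
    {A : Matrix m m R} {X Y : Matrix m ι R} {D : Matrix ι ι R} {b : m → R} {w : ι → R}
    (hAX : A * X = X * D + vecMulVec b w) (hYb : Yᵀ *ᵥ b = 1) (hYX : IsUnit (Yᵀ * X)) :
    (Yᵀ * X)⁻¹ * (Yᵀ * A * X) = D + (Yᵀ * X)⁻¹ * replicateRow ι w := by
  rw [Matrix.mul_assoc, hAX, Matrix.mul_add, ← Matrix.mul_assoc Yᵀ, mul_vecMulVec, hYb,
    one_vecMulVec, Matrix.mul_add,
    nonsing_inv_mul_cancel_left _ _ ((isUnit_iff_isUnit_det _).mp hYX)]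

end Matrix

theorem stmt_8_general {n p : ℕ}
    (A : Matrix (Fin n) (Fin n) ℂ) (b c : Fin n → ℂ)
    (s : Fin p → ℂ)
    (hden : ∀ i : Fin p,
      c ⬝ᵥ (A - s i • (1 : Matrix (Fin n) (Fin n) ℂ))⁻¹.mulVec b ≠ 0)
    (X Y : Matrix (Fin n) (Fin p) ℂ)
    (hX : ∀ i : Fin p, (fun r => X r i)
      = (c ⬝ᵥ (A - s i • (1 : Matrix (Fin n) (Fin n) ℂ))⁻¹.mulVec b)⁻¹ •
          (A - s i • (1 : Matrix (Fin n) (Fin n) ℂ))⁻¹.mulVec b)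
    (hY : ∀ i : Fin p, (fun r => Y r i)
      = (c ⬝ᵥ (A - s i • (1 : Matrix (Fin n) (Fin n) ℂ))⁻¹.mulVec b)⁻¹ •
          (Aᵀ - s i • (1 : Matrix (Fin n) (Fin n) ℂ))⁻¹.mulVec c)
    (hYX : IsUnit (Yᵀ * X)) :
    (Yᵀ * X)⁻¹ * (Yᵀ * A * X)
      = Matrix.diagonal s + (Yᵀ * X)⁻¹ *
          Matrix.of (fun _ j : Fin p =>
            (c ⬝ᵥ (A - s j • (1 : Matrix (Fin n) (Fin n) ℂ))⁻¹.mulVec b)⁻¹) := by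
  have hAX : A * X = X * diagonal s + vecMulVec b
      (fun j => (c ⬝ᵥ (A - s j • (1 : Matrix (Fin n) (Fin n) ℂ))⁻¹ *ᵥ b)⁻¹) :=
    mul_eq_mul_diagonal_add_vecMulVec fun j => by
      rw [hX j, mulVec_smul, mulVec_nonsing_inv_sub_smul_mulVec
        (isUnit_of_dotProduct_nonsing_inv_mulVec_ne_zero (hden j)), smul_add, smul_comm]
  have hYb : Yᵀ *ᵥ b = 1 := funext fun i => by
    change (fun r => Y r i) ⬝ᵥ b = 1
    rw [hY i, smul_dotProduct, nonsing_inv_transpose_sub_smul_mulVec_dotProduct, smul_eq_mul,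
      inv_mul_cancel₀ (hden i)]
  exact nonsing_inv_mul_mul_mul_eq_of_mul_eq hAX hYb hYX

/-- Off the spectrum,
`F(S) = diag(S) + (Y(S)ᵀX(S))⁻¹ e eᵀ diag(1/(cᵀ(A-sᵢI)⁻¹b))ᵢ`. -/
theorem stmt_8 {n p : ℕ}
    (A : Matrix (Fin n) (Fin n) ℂ) (b c : Fin n → ℂ)
    (s : Fin p → ℂ)
    (hinv : ∀ i : Fin p, IsUnit (A - s i • (1 : Matrix (Fin n) (Fin n) ℂ)))
    (hden : ∀ i : Fin p,
      c ⬝ᵥ (A - s i • (1 : Matrix (Fin n) (Fin n) ℂ))⁻¹.mulVec b ≠ 0)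
    (X Y : Matrix (Fin n) (Fin p) ℂ)
    (hX : ∀ i : Fin p, (fun r => X r i)
      = (c ⬝ᵥ (A - s i • (1 : Matrix (Fin n) (Fin n) ℂ))⁻¹.mulVec b)⁻¹ •
          (A - s i • (1 : Matrix (Fin n) (Fin n) ℂ))⁻¹.mulVec b)
    (hY : ∀ i : Fin p, (fun r => Y r i)
      = (c ⬝ᵥ (A - s i • (1 : Matrix (Fin n) (Fin n) ℂ))⁻¹.mulVec b)⁻¹ •
          (Aᵀ - s i • (1 : Matrix (Fin n) (Fin n) ℂ))⁻¹.mulVec c)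
    (hYX : IsUnit (Yᵀ * X)) :
    (Yᵀ * X)⁻¹ * (Yᵀ * A * X)
      = Matrix.diagonal s + (Yᵀ * X)⁻¹ *
          Matrix.of (fun _ j : Fin p =>
            (c ⬝ᵥ (A - s j • (1 : Matrix (Fin n) (Fin n) ℂ))⁻¹.mulVec b)⁻¹) :=
  stmt_8_general A b c s hden X Y hX hY hYX
end

section
/- For the descriptor realization: if V, W ∈ C^{n×p} have columns V e_j = (A - s_j I)^{-1}b/(c^T(A - s_j I)^{-1}b) and W e_j = (A^T - s_j I)^{-1}c/(c^T(A - s_j I)^{-1}b), then W^T A V = e v^T + (W^T V) S, where S = diag(s_1,...,s_p), e = (1,...,1)^T, and v^T = (1/(c^T(A - s_1 I)^{-1}b), ..., 1/(c^T(A - s_p I)^{-1}b)); hence F = (W^T V)^{-1} W^T A V = (W^T V)^{-1} e v^T + S. -/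
/-! Since `(A - s_j I) V e_j = v_j b`, the columns of `V` satisfy `A V = b vᵀ + V S`.
The normalisation of `W e_j` by the same scalar `cᵀ(A - s_j I)⁻¹b` is exactly what makes
`Wᵀ b = e`, so multiplying by `Wᵀ` turns `b vᵀ` into `e vᵀ`. -/

open Matrix

namespace Matrix

variable {n p R : Type*} [Fintype n] [CommRing R]

theorem transpose_sub_smul_one_inv_mulVec_dotProduct [DecidableEq n] (A : Matrix n n R) (s : R)
    (b c : n → R) :
    (Aᵀ - s • 1)⁻¹ *ᵥ c ⬝ᵥ b = c ⬝ᵥ (A - s • 1)⁻¹ *ᵥ b := by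
  have hT : Aᵀ - s • 1 = (A - s • 1)ᵀ := by
    rw [transpose_sub, transpose_smul, transpose_one]
  rw [hT, ← transpose_nonsing_inv, mulVec_transpose, dotProduct_mulVec]

theorem mulVec_inv_sub_smul_one_mulVec [DecidableEq n] (A : Matrix n n R) (s : R)
    (h : IsUnit (A - s • 1)) (b : n → R) :
    A *ᵥ ((A - s • 1)⁻¹ *ᵥ b) = b + s • ((A - s • 1)⁻¹ *ᵥ b) := by
  have hb : (A - s • 1) *ᵥ ((A - s • 1)⁻¹ *ᵥ b) = b := by
    rw [mulVec_mulVec, mul_nonsing_inv _ ((isUnit_iff_isUnit_det _).mp h), one_mulVec]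
  rw [sub_mulVec, smul_mulVec, one_mulVec] at hb
  exact eq_add_of_sub_eq hb

theorem mul_eq_vecMulVec_add_mul_diagonal [Fintype p] [DecidableEq p] {A : Matrix n n R}
    {V : Matrix n p R} {b : n → R} {v s : p → R}
    (h : ∀ j, A *ᵥ (fun i => V i j) = v j • b + s j • (fun i => V i j)) :
    A * V = vecMulVec b v + V * diagonal s := by
  ext i j
  rw [add_apply, mul_diagonal, vecMulVec_apply, mul_comm (b i), mul_comm (V i j)]
  exact congrFun (h j) i

end Matrix

/-- `Wᵀ A V = e vᵀ + (WᵀV) S`, hence `F = (WᵀV)⁻¹ Wᵀ A V = (WᵀV)⁻¹ e vᵀ + S`,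
where `S = diag(s₁,...,s_p)`, `e = (1,...,1)ᵀ`, and
`vᵀ = (1/(cᵀ(A-s₁I)⁻¹b), ..., 1/(cᵀ(A-s_pI)⁻¹b))`. -/
theorem stmt_18 {n p : ℕ}
    (A : Matrix (Fin n) (Fin n) ℂ) (b c : Fin n → ℂ)
    (s : Fin p → ℂ)
    (hinv : ∀ j : Fin p, IsUnit (A - s j • (1 : Matrix (Fin n) (Fin n) ℂ)))
    (hden : ∀ j : Fin p,
      c ⬝ᵥ (A - s j • (1 : Matrix (Fin n) (Fin n) ℂ))⁻¹.mulVec b ≠ 0)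
    (V W : Matrix (Fin n) (Fin p) ℂ)
    (hV : ∀ j : Fin p, (fun i => V i j)
      = (c ⬝ᵥ (A - s j • (1 : Matrix (Fin n) (Fin n) ℂ))⁻¹.mulVec b)⁻¹ •
          (A - s j • (1 : Matrix (Fin n) (Fin n) ℂ))⁻¹.mulVec b)
    (hW : ∀ j : Fin p, (fun i => W i j)
      = (c ⬝ᵥ (A - s j • (1 : Matrix (Fin n) (Fin n) ℂ))⁻¹.mulVec b)⁻¹ •
          (Aᵀ - s j • (1 : Matrix (Fin n) (Fin n) ℂ))⁻¹.mulVec c)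
    (hWV : IsUnit (Wᵀ * V))
    (v : Fin p → ℂ)
    (hv : ∀ j : Fin p,
      v j = (c ⬝ᵥ (A - s j • (1 : Matrix (Fin n) (Fin n) ℂ))⁻¹.mulVec b)⁻¹) :
    Wᵀ * A * V = Matrix.of (fun _ j : Fin p => v j) + (Wᵀ * V) * Matrix.diagonal s ∧
    (Wᵀ * V)⁻¹ * (Wᵀ * A * V)
      = (Wᵀ * V)⁻¹ * Matrix.of (fun _ j : Fin p => v j) + Matrix.diagonal s := by
  have hWb : Wᵀ *ᵥ b = 1 := by
    ext j
    change (fun i => W i j) ⬝ᵥ b = 1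
    rw [hW j, smul_dotProduct, transpose_sub_smul_one_inv_mulVec_dotProduct, smul_eq_mul,
      inv_mul_cancel₀ (hden j)]
  have hAV : A * V = vecMulVec b v + V * diagonal s :=
    mul_eq_vecMulVec_add_mul_diagonal fun j => by
      rw [hV j, mulVec_smul, mulVec_inv_sub_smul_one_mulVec _ _ (hinv j), smul_add, smul_comm,
        ← hv j]
  have hWAV : Wᵀ * A * V = of (fun _ j => v j) + Wᵀ * V * diagonal s := by
    rw [Matrix.mul_assoc, hAV, Matrix.mul_add, mul_vecMulVec, hWb, one_vecMulVec,
      Matrix.mul_assoc]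
    rfl
  refine ⟨hWAV, ?_⟩
  rw [hWAV, Matrix.mul_add, ← Matrix.mul_assoc,
    nonsing_inv_mul _ ((isUnit_iff_isUnit_det _).mp hWV), Matrix.one_mul]
end
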